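/- Let E be a metric space, (P_t)_{t≥0} a semigroup of Markov kernels on E such that (t,x) ↦ P_t f(x) is jointly continuous on [0,∞) × E for every bounded continuous f, and each P_t (t>0) is strong Feller. Let N be a closed set with P_t(x,N) = 0 for all t > 0 and x ∈ E, and let Q_t be the restriction of P_t to F = E \ N. Then (t,x) ↦ Q_t f(x) is jointly continuous on [0,∞) × F for every bounded continuous f : F → ℝ. -/

import Mathlib

open MeasureTheory ProbabilityTheory Filter Topology
open scoped NNReal ENNReal Classical

/-!
For `t > 0` the semigroup property writes `P_t f = P_{t-s} (P_s f)` with `0 < s < t`; the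
strong Feller property makes `P_s f` bounded continuous, so joint continuity of `P_· (P_s f)`
handles a neighbourhood of `(t, x)`. At `t = 0` joint continuity says that `P_t(x, ·)` converges
weakly to `δ_{x₀}` as `(t, x) → (0, x₀)`, and weak convergence to a Dirac mass already gives
`∫ f dP_t(x, ·) → f x₀` for every bounded measurable `f` that is merely continuous at `x₀`:
off a small ball around `x₀`, `|f - f x₀|` is dominated by a multiple of a continuous bump
vanishing at `x₀`. The extension by zero of a continuous `g` on the open set `F` is continuous
at every point of `F`.
-/

section Integrals

variable {α : Type*} [MeasurableSpace α] {μ : Measure α}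

lemma integrable_of_abs_le [IsFiniteMeasure μ] {f : α → ℝ} (hf : Measurable f) {C : ℝ}
    (hfC : ∀ x, |f x| ≤ C) : Integrable f μ :=
  .of_bound hf.aestronglyMeasurable C (ae_of_all _ fun x => by simpa using hfC x)

lemma abs_integral_le_of_abs_le [IsProbabilityMeasure μ] {f : α → ℝ} {C : ℝ}
    (hfC : ∀ x, |f x| ≤ C) : |∫ x, f x ∂μ| ≤ C := by
  simpa using norm_integral_le_of_norm_le_const (μ := μ) (f := f) (ae_of_all _ hfC)

lemma abs_integral_sub_le_of_abs_sub_le [IsProbabilityMeasure μ] {f g : α → ℝ} {c : ℝ}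
    (hf : Integrable f μ) (hg : Integrable g μ) (hfg : ∀ x, |f x - c| ≤ g x) :
    |∫ x, f x ∂μ - c| ≤ ∫ x, g x ∂μ := by
  have hsub : ∫ x, f x ∂μ - c = ∫ x, (f x - c) ∂μ := by
    rw [integral_sub hf (integrable_const c), integral_const, probReal_univ, one_smul]
  rw [hsub]
  exact abs_integral_le_integral_abs.trans
    (integral_mono (hf.sub (integrable_const c)).abs hg hfg)

end Integrals

lemma tendsto_integral_of_tendsto_dirac_of_continuousAt {X E : Type*} [MetricSpace E]
    [MeasurableSpace E] [BorelSpace E] {l : Filter X} (μ : X → Measure E)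
    [∀ p, IsProbabilityMeasure (μ p)] {x₀ : E}
    (hμ : ∀ φ : E → ℝ, Continuous φ → (∃ C, ∀ x, |φ x| ≤ C) →
      Tendsto (fun p => ∫ y, φ y ∂μ p) l (𝓝 (φ x₀)))
    {f : E → ℝ} (hfm : Measurable f) {C : ℝ} (hfC : ∀ x, |f x| ≤ C) (hf : ContinuousAt f x₀) :
    Tendsto (fun p => ∫ y, f y ∂μ p) l (𝓝 (f x₀)) := by
  rw [Metric.tendsto_nhds]
  intro ε hε
  obtain ⟨δ, hδ, hfδ⟩ := Metric.continuousAt_iff.1 hf (ε / 2) (half_pos hε)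
  set bump : E → ℝ := fun y => min 1 (dist y x₀ / δ)
  have hbump : Continuous bump := by fun_prop
  have hbump_nonneg : ∀ y, 0 ≤ bump y := fun y => by positivity
  have hbump_abs : ∀ y, |bump y| ≤ 1 := fun y =>
    (abs_of_nonneg (hbump_nonneg y)).trans_le (min_le_left _ _)
  have hC : 0 ≤ C := (abs_nonneg _).trans (hfC x₀)
  have hf_le : ∀ y, |f y - f x₀| ≤ ε / 2 + 2 * C * bump y := by
    intro y
    by_cases hy : dist y x₀ < δ
    · have := hfδ hy
      rw [Real.dist_eq] at this
      nlinarith [hbump_nonneg y]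
    · have hbump_one : bump y = 1 := min_eq_left ((one_le_div hδ).2 (not_lt.1 hy))
      rw [hbump_one]
      linarith [abs_sub (f y) (f x₀), hfC y, hfC x₀]
  have hbump_small : ∀ᶠ p in l, 2 * C * ∫ y, bump y ∂μ p < ε / 2 := by
    have := (hμ bump hbump ⟨1, hbump_abs⟩).const_mul (2 * C)
    simp only [bump, dist_self, zero_div, min_eq_right zero_le_one, mul_zero] at this
    exact this.eventually (gt_mem_nhds (half_pos hε))
  filter_upwards [hbump_small] with p hp
  have hbump_int : Integrable bump (μ p) := integrable_of_abs_le hbump.measurable hbump_abs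
  rw [Real.dist_eq]
  calc |∫ y, f y ∂μ p - f x₀| ≤ ∫ y, (ε / 2 + 2 * C * bump y) ∂μ p :=
        abs_integral_sub_le_of_abs_sub_le (integrable_of_abs_le hfm hfC)
          ((integrable_const _).add (hbump_int.const_mul _)) hf_le
    _ = ε / 2 + 2 * C * ∫ y, bump y ∂μ p := by
        rw [integral_add (integrable_const _) (hbump_int.const_mul _), integral_const,
          integral_const_mul, probReal_univ, one_smul]
    _ < ε := by linarith

section MarkovSemigroup

variable {E : Type*} [TopologicalSpace E] [MeasurableSpace E] {P : ℝ≥0 → Kernel E E}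
  [∀ t, IsMarkovKernel (P t)]

lemma continuousAt_integral_of_pos
    (hCK : ∀ t s : ℝ≥0, P (t + s) = (P s) ∘ₖ (P t))
    (hJC : ∀ f : E → ℝ, Continuous f → (∃ C, ∀ x, |f x| ≤ C) →
      Continuous (fun p : ℝ≥0 × E => ∫ y, f y ∂(P p.1 p.2)))
    (hSF : ∀ t : ℝ≥0, 0 < t → ∀ f : E → ℝ, Measurable f → (∃ C, ∀ x, |f x| ≤ C) →
      Continuous (fun x => ∫ y, f y ∂(P t x)))
    {f : E → ℝ} (hfm : Measurable f) {C : ℝ} (hfC : ∀ x, |f x| ≤ C)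
    {p : ℝ≥0 × E} (hp : 0 < p.1) :
    ContinuousAt (fun q : ℝ≥0 × E => ∫ y, f y ∂(P q.1 q.2)) p := by
  set s := p.1 / 2
  set Psf : E → ℝ := fun x => ∫ y, f y ∂(P s x)
  have hPsf : Continuous fun q : ℝ≥0 × E => ∫ y, Psf y ∂(P (q.1 - s) q.2) :=
    (hJC Psf (hSF s (half_pos hp) f hfm ⟨C, hfC⟩)
      ⟨C, fun _ => abs_integral_le_of_abs_le hfC⟩).comp
      ((continuous_fst.sub continuous_const).prodMk continuous_snd)
  refine hPsf.continuousAt.congr ?_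
  filter_upwards [continuous_fst.continuousAt.eventually (lt_mem_nhds
    (NNReal.half_lt_self hp.ne'))] with q hq
  rw [← Kernel.integral_comp (integrable_of_abs_le hfm hfC), ← hCK,
    tsub_add_cancel_of_le hq.le]

end MarkovSemigroup

lemma continuousAt_integral_of_continuousAt {E : Type*} [MetricSpace E] [MeasurableSpace E]
    [BorelSpace E] {P : ℝ≥0 → Kernel E E} [∀ t, IsMarkovKernel (P t)]
    (hP0 : P 0 = Kernel.id)
    (hCK : ∀ t s : ℝ≥0, P (t + s) = (P s) ∘ₖ (P t))
    (hJC : ∀ f : E → ℝ, Continuous f → (∃ C, ∀ x, |f x| ≤ C) →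
      Continuous (fun p : ℝ≥0 × E => ∫ y, f y ∂(P p.1 p.2)))
    (hSF : ∀ t : ℝ≥0, 0 < t → ∀ f : E → ℝ, Measurable f → (∃ C, ∀ x, |f x| ≤ C) →
      Continuous (fun x => ∫ y, f y ∂(P t x)))
    {f : E → ℝ} (hfm : Measurable f) {C : ℝ} (hfC : ∀ x, |f x| ≤ C)
    {t : ℝ≥0} {x : E} (hf : ContinuousAt f x) :
    ContinuousAt (fun q : ℝ≥0 × E => ∫ y, f y ∂(P q.1 q.2)) (t, x) := by
  rcases eq_zero_or_pos t with rfl | ht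
  · have hP0x (φ : E → ℝ) : ∫ y, φ y ∂(P 0 x) = φ x := by
      rw [hP0, Kernel.id_apply, integral_dirac]
    rw [ContinuousAt, hP0x]
    refine tendsto_integral_of_tendsto_dirac_of_continuousAt (fun q : ℝ≥0 × E => P q.1 q.2)
      (fun φ hφ hφC => ?_) hfm hfC hf
    simpa only [hP0x] using (hJC φ hφ hφC).tendsto (0, x)
  · exact continuousAt_integral_of_pos hCK hJC hSF hfm hfC ht

theorem restricted_semigroup_jointly_continuous_general
    {E : Type*} [MetricSpace E] [MeasurableSpace E] [BorelSpace E]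
    (P : ℝ≥0 → Kernel E E) (hMarkov : ∀ t, IsMarkovKernel (P t))
    (hP0 : P 0 = Kernel.id)
    (hCK : ∀ t s : ℝ≥0, P (t + s) = (P s) ∘ₖ (P t))
    (hJC : ∀ f : E → ℝ, Continuous f → (∃ C, ∀ x, |f x| ≤ C) →
      Continuous (fun p : ℝ≥0 × E => ∫ y, f y ∂(P p.1 p.2)))
    (hSF : ∀ t : ℝ≥0, 0 < t → ∀ f : E → ℝ, Measurable f → (∃ C, ∀ x, |f x| ≤ C) →
      Continuous (fun x => ∫ y, f y ∂(P t x)))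
    (N : Set E) (hNclosed : IsClosed N) :
    ∀ g : ↥(Nᶜ) → ℝ, Continuous g → (∃ C, ∀ x, |g x| ≤ C) →
      Continuous (fun p : ℝ≥0 × ↥(Nᶜ) =>
        ∫ y, (fun y : E => if h : y ∈ Nᶜ then g ⟨y, h⟩ else 0) y ∂(P p.1 (p.2 : E))) := by
  rintro g hg ⟨C, hgC⟩
  have := hMarkov
  set f : E → ℝ := fun y => if h : y ∈ Nᶜ then g ⟨y, h⟩ else 0
  have hfm : Measurable f :=
    Measurable.dite (f := fun y : ↥(Nᶜ) => g y) hg.measurable measurable_const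
      hNclosed.isOpen_compl.measurableSet
  have hfC : ∀ y, |f y| ≤ max C 0 := by
    intro y
    by_cases hy : y ∈ Nᶜ
    · simp only [f, dif_pos hy]
      exact (hgC _).trans (le_max_left _ _)
    · simp only [f, dif_neg hy, abs_zero, le_max_right]
  have hf : ContinuousOn f Nᶜ := by
    rw [continuousOn_iff_continuous_domRestrict]
    exact hg.congr fun y => (dif_pos y.2 : f y = g ⟨y.1, y.2⟩).symm
  rw [continuous_iff_continuousAt]
  rintro ⟨t, x⟩
  refine ContinuousAt.comp (f := fun p : ℝ≥0 × ↥(Nᶜ) => (p.1, (p.2 : E)))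
    (continuousAt_integral_of_continuousAt hP0 hCK hJC hSF hfm hfC
      (hf.continuousAt (hNclosed.isOpen_compl.mem_nhds x.2))) (by fun_prop)

/-- If `(t,x) ↦ P_t f(x)` is jointly continuous for every bounded continuous `f`,
each `P_t` (`t > 0`) is strong Feller, and `N` is a closed `(P_t)`-negligible set, then
`(t,x) ↦ Q_t f(x)` is jointly continuous on `[0,∞) × F` for every bounded continuous
`f : F → ℝ`, where `F = E \ N` and `Q_t` is the restriction of `P_t` to `F`. -/
theorem restricted_semigroup_jointly_continuous
    {E : Type*} [MetricSpace E] [MeasurableSpace E] [BorelSpace E]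
    (P : ℝ≥0 → Kernel E E) (hMarkov : ∀ t, IsMarkovKernel (P t))
    (hP0 : P 0 = Kernel.id)
    (hCK : ∀ t s : ℝ≥0, P (t + s) = (P s) ∘ₖ (P t))
    (hJC : ∀ f : E → ℝ, Continuous f → (∃ C, ∀ x, |f x| ≤ C) →
      Continuous (fun p : ℝ≥0 × E => ∫ y, f y ∂(P p.1 p.2)))
    (hSF : ∀ t : ℝ≥0, 0 < t → ∀ f : E → ℝ, Measurable f → (∃ C, ∀ x, |f x| ≤ C) →
      Continuous (fun x => ∫ y, f y ∂(P t x)))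
    (N : Set E) (hNclosed : IsClosed N)
    (hNneg : ∀ t : ℝ≥0, 0 < t → ∀ x : E, P t x N = 0) :
    ∀ g : ↥(Nᶜ) → ℝ, Continuous g → (∃ C, ∀ x, |g x| ≤ C) →
      Continuous (fun p : ℝ≥0 × ↥(Nᶜ) =>
        ∫ y, (fun y : E => if h : y ∈ Nᶜ then g ⟨y, h⟩ else 0) y ∂(P p.1 (p.2 : E))) :=
  restricted_semigroup_jointly_continuous_general P hMarkov hP0 hCK hJC hSF N hNclosed
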